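/- (Closed form of the joint probability with n2 ties, proved by induction within the proof of Lemma 5.1.) Fix Y ∈ ℤ, integers 1 ≤ r ≤ D and 0 ≤ n2 ≤ D. Then P(Z_1 = Y, …, Z_{n2} = Y ∧ os_r(Z) = Y) = f(Y)^{n2} · Ψ, where: Ψ = F^{(r−n2, D−n2)}(Y) − F^{(r, D−n2)}(Y−1) if n2 < min(r, D−r+1); Ψ = 1 − F^{(r, D−n2)}(Y−1) if r ≤ n2 < D−r+1; Ψ = F^{(r−n2, D−n2)}(Y) if D−r+1 ≤ n2 < r; and Ψ = 1 if max(r, D−r+1) ≤ n2 ≤ D. -/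

import Mathlib

open MeasureTheory

/-- The measure on ℤ with mass function `f`. -/
noncomputable def parentMeasure (f : ℤ → ℝ) : Measure ℤ :=
  Measure.count.withDensity fun z => ENNReal.ofReal (f z)

/-- `P f D S` is the probability of the event `S` under the `D`-fold product of the
measure on ℤ with pmf `f`, i.e. the law of `D` i.i.d. draws `Z = (Z_1, …, Z_D)` from `f`. -/
noncomputable def P (f : ℤ → ℝ) (D : ℕ) (S : Set (Fin D → ℤ)) : ℝ :=
  (Measure.pi (fun _ : Fin D => parentMeasure f) S).toReal

/-- The CDF of `f`: `F(y) = ∑_{t ≤ y} f(t)`. -/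
noncomputable def Fcdf (f : ℤ → ℝ) (y : ℤ) : ℝ := ∑' z : {t : ℤ // t ≤ y}, f z.1

/-- The number of entries of `z` that are `≤ y`. -/
def countLe {n : ℕ} (z : Fin n → ℤ) (y : ℤ) : ℕ :=
  (Finset.univ.filter fun i => z i ≤ y).card

/-- `osEq r z Y` says that the `r`-th smallest entry of `z` (counting multiplicity)
equals `Y`: the `r`-th order statistic is `≤ Y` but not `≤ Y - 1`. -/
def osEq {n : ℕ} (r : ℕ) (z : Fin n → ℤ) (Y : ℤ) : Prop :=
  r ≤ countLe z Y ∧ countLe z (Y - 1) < r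

/-- The order-statistic CDF `F^{(a,m)}(y) = ∑_{t=a}^{m} (m choose t) F(y)^t (1−F(y))^{m−t}`. -/
noncomputable def osCDF (f : ℤ → ℝ) (a m : ℕ) (y : ℤ) : ℝ :=
  ∑ t ∈ Finset.Icc a m, (m.choose t : ℝ) * Fcdf f y ^ t * (1 - Fcdf f y) ^ (m - t)

/-!
Once the first `n2` coordinates equal `Y`, at least `r` coordinates are `≤ Y` iff at least
`r - n2` of the other `D - n2` are, while the coordinates `≤ Y - 1` are all among those others.
So the event is `A \ B` with `B ⊆ A`, where `A` asks that at least `r - n2` of the free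
coordinates be `≤ Y` and `B` that at least `r` of them be `≤ Y - 1`. Splitting `A` and `B`
according to the exact set of free coordinates below the threshold and using independence,
each has probability `f(Y)^n2` times a binomial tail, i.e. `F^{(r-n2, D-n2)}(Y)` and
`F^{(r, D-n2)}(Y-1)`. The four cases are then `F^{(0,m)} = 1` (binomial theorem) and
`F^{(a,m)} = 0` for `a > m`.
-/

open Finset

theorem Finset.sum_powerset_filter_le_card {β R : Type*} [CommSemiring R] (S : Finset β)
    (b : ℕ) (x y : R) :
    ∑ T ∈ S.powerset with b ≤ #T, x ^ #T * y ^ (#S - #T)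
      = ∑ t ∈ Icc b #S, ((#S).choose t : R) * x ^ t * y ^ (#S - t) := by
  rw [sum_filter, sum_powerset_apply_card (fun m => if b ≤ m then x ^ m * y ^ (#S - m) else 0)]
  simp_rw [smul_ite, smul_zero]
  rw [← sum_filter]
  refine sum_congr (by ext; simp [and_comm]) fun t _ => ?_
  rw [nsmul_eq_mul, mul_assoc]

section IndependentCoordinates

variable {ι α : Type*} [Fintype ι] [DecidableEq ι]

def patternBox (K T : Finset ι) (u s : Set α) : Set (ι → α) :=
  Set.univ.pi fun i => if i ∈ K then u else if i ∈ T then s else sᶜ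

open Classical in
lemma mem_patternBox {K T : Finset ι} {u s : Set α} (hT : T ⊆ Kᶜ) {ω : ι → α} :
    ω ∈ patternBox K T u s ↔ (∀ i ∈ K, ω i ∈ u) ∧ {i ∈ Kᶜ | ω i ∈ s} = T := by
  simp only [patternBox, Set.mem_pi, Set.mem_univ, true_implies, Finset.ext_iff, mem_filter,
    mem_compl]
  constructor
  · intro h
    refine ⟨fun i hi => by simpa [hi] using h i, fun i => ⟨fun ⟨hiK, his⟩ => ?_, fun hiT => ?_⟩⟩
    · by_contra hiT
      simpa [hiK, hiT, his] using h i
    · have hiK := mem_compl.mp (hT hiT)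
      exact ⟨hiK, by simpa [hiK, hiT] using h i⟩
  · rintro ⟨hu, hT'⟩ i
    by_cases hiK : i ∈ K
    · simpa [hiK] using hu i hiK
    · by_cases hiT : i ∈ T
      · simpa [hiK, hiT] using ((hT' i).mpr hiT).2
      · simpa [hiK, hiT] using fun h => hiT ((hT' i).mp ⟨hiK, h⟩)

lemma measureReal_pi_patternBox [MeasurableSpace α] (μ : Measure α) [SigmaFinite μ]
    {K T : Finset ι} (u s : Set α) (hT : T ⊆ Kᶜ) :
    (Measure.pi fun _ : ι => μ).real (patternBox K T u s)
      = μ.real u ^ #K * (μ.real s ^ #T * μ.real sᶜ ^ (#Kᶜ - #T)) := by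
  rw [measureReal_def, patternBox, Measure.pi_pi, ENNReal.toReal_prod]
  simp only [← measureReal_def, apply_ite μ.real]
  rw [prod_ite, prod_ite, filter_mem_eq_inter, filter_notMem_eq_sdiff, filter_mem_eq_inter,
    filter_notMem_eq_sdiff, univ_inter, ← compl_eq_univ_sdiff, inter_eq_right.mpr hT]
  simp only [prod_const, card_sdiff_of_subset hT]

open Classical in
theorem measureReal_pi_forall_mem_and_le_card_filter [MeasurableSpace α] (μ : Measure α)
    [IsProbabilityMeasure μ] {u s : Set α} (hu : MeasurableSet u) (hs : MeasurableSet s)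
    (K : Finset ι) (b : ℕ) :
    (Measure.pi fun _ : ι => μ).real {ω | (∀ i ∈ K, ω i ∈ u) ∧ b ≤ #{i ∈ Kᶜ | ω i ∈ s}}
      = μ.real u ^ #K * ∑ t ∈ Icc b #Kᶜ,
          ((#Kᶜ).choose t : ℝ) * μ.real s ^ t * (1 - μ.real s) ^ (#Kᶜ - t) := by
  have hunion : {ω : ι → α | (∀ i ∈ K, ω i ∈ u) ∧ b ≤ #{i ∈ Kᶜ | ω i ∈ s}}
      = ⋃ T ∈ Kᶜ.powerset.filter (b ≤ #·), patternBox K T u s := by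
    ext ω
    simp only [Set.mem_ofPred_eq, Set.mem_iUnion, mem_filter, mem_powerset, exists_prop]
    constructor
    · rintro ⟨hu, hb⟩
      exact ⟨_, ⟨filter_subset _ _, hb⟩, (mem_patternBox (filter_subset _ _)).mpr ⟨hu, rfl⟩⟩
    · rintro ⟨T, ⟨hT, hb⟩, hω⟩
      obtain ⟨hu, rfl⟩ := (mem_patternBox hT).mp hω
      exact ⟨hu, hb⟩
  have hdisj : Set.PairwiseDisjoint ↑(Kᶜ.powerset.filter (b ≤ #·)) (patternBox K · u s) := by
    intro T hT T' hT' hne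
    simp only [coe_filter, mem_powerset, Set.mem_ofPred_eq] at hT hT'
    refine Set.disjoint_left.mpr fun ω hω hω' => hne ?_
    rw [← ((mem_patternBox hT.1).mp hω).2, ← ((mem_patternBox hT'.1).mp hω').2]
  have hmeas : ∀ T ∈ Kᶜ.powerset.filter (b ≤ #·), MeasurableSet (patternBox K T u s) :=
    fun T _ => MeasurableSet.univ_pi fun i => by
      split_ifs
      exacts [hu, hs, hs.compl]
  rw [hunion, measureReal_biUnion_finset hdisj hmeas, sum_congr rfl fun T hT =>
    measureReal_pi_patternBox μ u s (mem_powerset.mp (mem_filter.mp hT).1),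
    ← mul_sum, probReal_compl_eq_one_sub hs, sum_powerset_filter_le_card]

end IndependentCoordinates

section parentMeasure

variable {f : ℤ → ℝ}

lemma parentMeasure_apply (s : Set ℤ) :
    parentMeasure f s = ∑' z : s, ENNReal.ofReal (f z) := by
  rw [parentMeasure, withDensity_apply _ s.to_countable.measurableSet,
    ← lintegral_indicator s.to_countable.measurableSet, lintegral_count, ← _root_.tsum_subtype]

lemma measureReal_parentMeasure (hf0 : ∀ z, 0 ≤ f z) (hf : Summable f) (s : Set ℤ) :
    (parentMeasure f).real s = ∑' z : s, f z := by
  rw [measureReal_def, parentMeasure_apply, ← ENNReal.ofReal_tsum_of_nonneg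
    (f := fun z : s => f z) (fun _ => hf0 _) (hf.subtype s),
    ENNReal.toReal_ofReal (tsum_nonneg fun _ => hf0 _)]

lemma isProbabilityMeasure_parentMeasure (hf0 : ∀ z, 0 ≤ f z) (hf1 : HasSum f 1) :
    IsProbabilityMeasure (parentMeasure f) := by
  constructor
  rw [parentMeasure_apply, tsum_univ (fun z => ENNReal.ofReal (f z)),
    ← ENNReal.ofReal_tsum_of_nonneg hf0 hf1.summable, hf1.tsum_eq, ENNReal.ofReal_one]

lemma measureReal_parentMeasure_singleton (hf0 : ∀ z, 0 ≤ f z) (hf : Summable f) (Y : ℤ) :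
    (parentMeasure f).real {Y} = f Y := by
  rw [measureReal_parentMeasure hf0 hf, tsum_singleton Y f]

lemma measureReal_parentMeasure_Iic (hf0 : ∀ z, 0 ≤ f z) (hf : Summable f) (y : ℤ) :
    (parentMeasure f).real (Set.Iic y) = Fcdf f y :=
  measureReal_parentMeasure hf0 hf _

end parentMeasure

lemma P_eq_measureReal (f : ℤ → ℝ) (D : ℕ) (S : Set (Fin D → ℤ)) :
    P f D S = (Measure.pi fun _ : Fin D => parentMeasure f).real S :=
  rfl

theorem P_forall_eq_and_le_card_filter_le {f : ℤ → ℝ} (hf0 : ∀ z, 0 ≤ f z) (hf1 : HasSum f 1)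
    {D : ℕ} (K : Finset (Fin D)) (Y y : ℤ) (b : ℕ) :
    P f D {ω | (∀ i ∈ K, ω i = Y) ∧ b ≤ #{i ∈ Kᶜ | ω i ≤ y}}
      = f Y ^ #K * osCDF f b (D - #K) y := by
  have := isProbabilityMeasure_parentMeasure hf0 hf1
  have h := measureReal_pi_forall_mem_and_le_card_filter (parentMeasure f)
    (MeasurableSet.of_discrete (s := {Y})) (MeasurableSet.of_discrete (s := Set.Iic y)) K b
  simp only [Set.mem_singleton_iff, Set.mem_Iic, card_compl, Fintype.card_fin,
    measureReal_parentMeasure_singleton hf0 hf1.summable,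
    measureReal_parentMeasure_Iic hf0 hf1.summable] at h
  rw [P_eq_measureReal, osCDF]
  convert h using 1

lemma countLe_of_forall_eq {n : ℕ} {K : Finset (Fin n)} {ω : Fin n → ℤ} {Y : ℤ}
    (hω : ∀ i ∈ K, ω i = Y) (y : ℤ) :
    countLe ω y = (if Y ≤ y then #K else 0) + #{i ∈ Kᶜ | ω i ≤ y} := by
  rw [countLe, ← union_compl K, filter_union,
    card_union_of_disjoint (disjoint_filter_filter disjoint_compl_right)]
  congr 1
  split_ifs with hY
  · rw [filter_true_of_mem fun i hi => hω i hi ▸ hY]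
  · rw [filter_false_of_mem fun i hi => hω i hi ▸ hY, card_empty]

lemma setOf_forall_eq_and_osEq {n : ℕ} (K : Finset (Fin n)) (r : ℕ) (Y : ℤ) :
    {ω : Fin n → ℤ | (∀ i ∈ K, ω i = Y) ∧ osEq r ω Y}
      = {ω | (∀ i ∈ K, ω i = Y) ∧ r - #K ≤ #{i ∈ Kᶜ | ω i ≤ Y}} \
        {ω | (∀ i ∈ K, ω i = Y) ∧ r ≤ #{i ∈ Kᶜ | ω i ≤ Y - 1}} := by
  ext ω
  simp only [Set.mem_ofPred_eq, Set.mem_sdiff, osEq]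
  by_cases hω : ∀ i ∈ K, ω i = Y
  · rw [countLe_of_forall_eq hω, countLe_of_forall_eq hω, if_pos le_rfl, if_neg (by omega)]
    simp only [and_iff_right hω]
    omega
  · simp [hω]

theorem P_forall_eq_and_osEq {f : ℤ → ℝ} (hf0 : ∀ z, 0 ≤ f z) (hf1 : HasSum f 1)
    {D : ℕ} (K : Finset (Fin D)) (r : ℕ) (Y : ℤ) :
    P f D {ω | (∀ i ∈ K, ω i = Y) ∧ osEq r ω Y}
      = f Y ^ #K * (osCDF f (r - #K) (D - #K) Y - osCDF f r (D - #K) (Y - 1)) := by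
  have hsub : {ω : Fin D → ℤ | (∀ i ∈ K, ω i = Y) ∧ r ≤ #{i ∈ Kᶜ | ω i ≤ Y - 1}}
      ⊆ {ω | (∀ i ∈ K, ω i = Y) ∧ r - #K ≤ #{i ∈ Kᶜ | ω i ≤ Y}} :=
    fun ω ⟨hω, hr⟩ => ⟨hω, (Nat.sub_le r #K).trans <| hr.trans <|
      card_le_card <| monotone_filter_right _ fun _ _ hi => hi.trans (Int.sub_le_self Y one_pos.le)⟩
  have := isProbabilityMeasure_parentMeasure hf0 hf1
  rw [setOf_forall_eq_and_osEq, P_eq_measureReal,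
    measureReal_sdiff hsub (Set.to_countable _).measurableSet, ← P_eq_measureReal,
    ← P_eq_measureReal, P_forall_eq_and_le_card_filter_le hf0 hf1,
    P_forall_eq_and_le_card_filter_le hf0 hf1, mul_sub]

lemma osCDF_zero_left (f : ℤ → ℝ) (m : ℕ) (y : ℤ) : osCDF f 0 m y = 1 := by
  rw [osCDF, ← Nat.range_succ_eq_Icc_zero]
  calc _ = (Fcdf f y + (1 - Fcdf f y)) ^ m := by
        rw [add_pow]
        exact sum_congr rfl fun t _ => by ring
    _ = 1 := by rw [add_sub_cancel, one_pow]

lemma osCDF_eq_zero_of_lt (f : ℤ → ℝ) {a m : ℕ} (h : m < a) (y : ℤ) : osCDF f a m y = 0 := by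
  rw [osCDF, Icc_eq_empty_of_lt h, sum_empty]

theorem joint_probability_with_ties_general
    (f : ℤ → ℝ) (hf0 : ∀ z, 0 ≤ f z) (hf1 : HasSum f 1)
    (Y : ℤ) (D r n2 : ℕ) (hn2 : n2 ≤ D) :
    P f D {ω | (∀ t : Fin D, t.1 < n2 → ω t = Y) ∧ osEq r ω Y}
      = f Y ^ n2 *
        (if n2 < min r (D - r + 1) then
           osCDF f (r - n2) (D - n2) Y - osCDF f r (D - n2) (Y - 1)
         else if r ≤ n2 ∧ n2 < D - r + 1 then
           1 - osCDF f r (D - n2) (Y - 1)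
         else if D - r + 1 ≤ n2 ∧ n2 < r then
           osCDF f (r - n2) (D - n2) Y
         else 1) := by
  set K : Finset (Fin D) := {t | t.1 < n2}
  have hK : #K = n2 := by simp [K, Fin.card_filter_val_lt, hn2]
  have hE : {ω : Fin D → ℤ | (∀ t : Fin D, t.1 < n2 → ω t = Y) ∧ osEq r ω Y}
      = {ω | (∀ i ∈ K, ω i = Y) ∧ osEq r ω Y} := by
    simp [K]
  rw [hE, P_forall_eq_and_osEq hf0 hf1, hK]
  congr 1
  split_ifs with h1 h2 h3
  · rfl
  · rw [Nat.sub_eq_zero_of_le h2.1, osCDF_zero_left]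
  · rw [osCDF_eq_zero_of_lt f (a := r) (by omega), sub_zero]
  · rw [Nat.sub_eq_zero_of_le (by omega), osCDF_zero_left, osCDF_eq_zero_of_lt f (by omega),
      sub_zero]

/-- **Closed form of the joint probability with `n2` ties** (induction step within the
proof of Lemma 5.1): for `1 ≤ r ≤ D` and `0 ≤ n2 ≤ D`,
`P(Z_1 = Y, …, Z_{n2} = Y ∧ os_r(Z) = Y) = f(Y)^{n2} · Ψ`, where `Ψ` is the case-defined
expression in `r`, `D`, `n2`. -/
theorem joint_probability_with_ties
    (f : ℤ → ℝ) (hf0 : ∀ z, 0 ≤ f z) (hf1 : HasSum f 1)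
    (Y : ℤ) (D r n2 : ℕ) (hr1 : 1 ≤ r) (hrD : r ≤ D) (hn2 : n2 ≤ D) :
    P f D {ω | (∀ t : Fin D, t.1 < n2 → ω t = Y) ∧ osEq r ω Y}
      = f Y ^ n2 *
        (if n2 < min r (D - r + 1) then
           osCDF f (r - n2) (D - n2) Y - osCDF f r (D - n2) (Y - 1)
         else if r ≤ n2 ∧ n2 < D - r + 1 then
           1 - osCDF f r (D - n2) (Y - 1)
         else if D - r + 1 ≤ n2 ∧ n2 < r then
           osCDF f (r - n2) (D - n2) Y
         else 1) :=
  joint_probability_with_ties_general f hf0 hf1 Y D r n2 hn2
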